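/- arXiv:2209.00004 — 2 statements merged into one kernel-verified Lean document; each statement's English description precedes it below -/
import Mathlib

section
/- There exists a constant C > 0, depending only on p, such that for every g satisfying (G1)–(G3), every ε ∈ (0,1), and all ξ₀, ξ₁ ∈ ℝ^k: if 1 < p < 2 then |A_{p,ε}(ξ₁) − A_{p,ε}(ξ₀)| ≤ C·Γ·|ξ₁ − ξ₀|^{p−1}, and if 2 ≤ p < ∞ then |A_{p,ε}(ξ₁) − A_{p,ε}(ξ₀)| ≤ C·Γ·(ε^{p−2} + |ξ₀|^{p−2} + |ξ₁|^{p−2})·|ξ₁ − ξ₀|. -/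
/-!
Writing `σ = ε² + |ξ|²`, the field `A(ξ) = g'(σ) ξ` has derivative
`DA(ξ) = g'(σ) I + 2 g''(σ) ξ ⊗ ξ`, whose norm is at most `3 Γ σ^{p/2-1}` by (G1), (G2) and
`|ξ|² ≤ σ`. The mean value theorem on the segment `[ξ₀, ξ₁]` then reduces everything to bounding
`σ^{p/2-1}` along the segment. For `p ≥ 2` this is at most a multiple of
`ε^{p-2} + |ξ₀|^{p-2} + |ξ₁|^{p-2}`. For `p < 2` the exponent is negative: if
`2 |ξ₁ - ξ₀| ≤ max |ξᵢ|`, the segment stays at distance `≥ |ξ₁ - ξ₀|` from the origin and the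
mean value theorem gives `3 Γ |ξ₁ - ξ₀|^{p-1}`; otherwise both `|ξᵢ| < 2 |ξ₁ - ξ₀|` and the
pointwise bound `|A(ξ)| ≤ Γ |ξ|^{p-1}` suffices.
-/

open Real Set

theorem sq_rpow_half_sub_one {x : ℝ} (hx : 0 ≤ x) (p : ℝ) :
    (x ^ 2) ^ (p / 2 - 1) = x ^ (p - 2) := by
  rw [← rpow_natCast, ← rpow_mul hx]
  ring_nf

theorem rpow_max_le_add {x y : ℝ} (hx : 0 ≤ x) (hy : 0 ≤ y) (s : ℝ) :
    max x y ^ s ≤ x ^ s + y ^ s := by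
  rcases max_cases x y with ⟨h, -⟩ | ⟨h, -⟩ <;> rw [h] <;>
    linarith [rpow_nonneg hx s, rpow_nonneg hy s]

theorem sq_add_sq_rpow_le {x y p : ℝ} (hx : 0 ≤ x) (hy : 0 ≤ y) (hp : 2 ≤ p) :
    (x ^ 2 + y ^ 2) ^ (p / 2 - 1) ≤ 2 ^ (p / 2 - 1) * (x ^ (p - 2) + y ^ (p - 2)) := by
  have hm : x ^ 2 + y ^ 2 ≤ 2 * max x y ^ 2 := by
    have := pow_le_pow_left₀ hx (le_max_left x y) 2
    have := pow_le_pow_left₀ hy (le_max_right x y) 2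
    linarith
  calc (x ^ 2 + y ^ 2) ^ (p / 2 - 1) ≤ (2 * max x y ^ 2) ^ (p / 2 - 1) :=
        rpow_le_rpow (by positivity) hm (by linarith)
    _ = 2 ^ (p / 2 - 1) * max x y ^ (p - 2) := by
        rw [mul_rpow zero_le_two (by positivity), sq_rpow_half_sub_one (le_max_of_le_left hx)]
    _ ≤ 2 ^ (p / 2 - 1) * (x ^ (p - 2) + y ^ (p - 2)) := by
        gcongr
        exact rpow_max_le_add hx hy _

section Segment

variable {F : Type*} [SeminormedAddCommGroup F] [NormedSpace ℝ F] {x y z : F}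

theorem norm_le_max_of_mem_segment (hz : z ∈ segment ℝ x y) : ‖z‖ ≤ max ‖x‖ ‖y‖ :=
  convexOn_univ_norm.le_on_segment (mem_univ x) (mem_univ y) hz

theorem max_norm_sub_le_norm_of_mem_segment (hz : z ∈ segment ℝ x y) :
    max ‖x‖ ‖y‖ - ‖y - x‖ ≤ ‖z‖ := by
  have h₀ : ‖x‖ - ‖z‖ ≤ ‖y - x‖ := (norm_sub_norm_le x z).trans
    ((norm_sub_rev x z).trans_le (norm_sub_le_of_mem_segment hz))
  have h₁ : ‖y‖ - ‖z‖ ≤ ‖y - x‖ := (norm_sub_norm_le y z).trans ((norm_sub_rev y z).trans_le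
    ((norm_sub_le_of_mem_segment (segment_symm ℝ x y ▸ hz)).trans_eq (norm_sub_rev x y)))
  rw [sub_le_iff_le_add, max_le_iff]
  constructor <;> linarith

end Segment

variable {E : Type*} [NormedAddCommGroup E] [InnerProductSpace ℝ E]

/-- The field `A_{p,ε}(ξ) = a(ε² + |ξ|²) ξ`, for `a = g'`. -/
noncomputable def radialField (a : ℝ → ℝ) (ε : ℝ) (ξ : E) : E := a (ε ^ 2 + ‖ξ‖ ^ 2) • ξ

theorem hasFDerivAt_radialField {a : ℝ → ℝ} {b ε : ℝ} {ξ : E}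
    (ha : HasDerivAt a b (ε ^ 2 + ‖ξ‖ ^ 2)) :
    HasFDerivAt (radialField a ε)
      (a (ε ^ 2 + ‖ξ‖ ^ 2) • ContinuousLinearMap.id ℝ E + (b • 2 • innerSL ℝ ξ).smulRight ξ)
      ξ :=
  (ha.comp_hasFDerivAt ξ ((hasStrictFDerivAt_norm_sq ξ).hasFDerivAt.const_add _)).smul
    (hasFDerivAt_id ξ)

theorem norm_radialFieldDeriv_le {α β p Γ σ : ℝ} {ξ : E} (hσ : 0 < σ) (hξ : ‖ξ‖ ^ 2 ≤ σ)
    (hα : |α| ≤ Γ * σ ^ (p / 2 - 1)) (hβ : |β| ≤ Γ * σ ^ (p / 2 - 2)) :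
    ‖α • ContinuousLinearMap.id ℝ E + (β • 2 • innerSL ℝ ξ).smulRight ξ‖
      ≤ 3 * Γ * σ ^ (p / 2 - 1) := by
  have hΓσ : 0 ≤ Γ * σ ^ (p / 2 - 1) := (abs_nonneg α).trans hα
  have hβσ : |β| * ‖ξ‖ ^ 2 ≤ Γ * σ ^ (p / 2 - 1) := calc
    |β| * ‖ξ‖ ^ 2 ≤ Γ * σ ^ (p / 2 - 2) * σ :=
      mul_le_mul hβ hξ (by positivity) ((abs_nonneg β).trans hβ)
    _ = Γ * σ ^ (p / 2 - 1) := by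
      rw [mul_assoc, ← rpow_add_one hσ.ne']
      ring_nf
  refine ContinuousLinearMap.opNorm_le_bound _ (by linarith) fun d => ?_
  simp only [add_apply, smul_apply, ContinuousLinearMap.id_apply,
    ContinuousLinearMap.smulRight_apply, innerSL_apply_apply, nsmul_eq_mul, Nat.cast_ofNat,
    smul_eq_mul]
  calc ‖α • d + (β * (2 * inner ℝ ξ d)) • ξ‖ ≤ |α| * ‖d‖ + |β| * (2 * (‖ξ‖ * ‖d‖)) * ‖ξ‖ := by
        refine (norm_add_le _ _).trans (add_le_add ((norm_smul_le _ _).trans_eq ?_) ?_)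
        · rw [Real.norm_eq_abs]
        · rw [norm_smul, Real.norm_eq_abs, abs_mul, abs_mul, abs_two]
          gcongr
          exact abs_real_inner_le_norm ξ d
    _ = |α| * ‖d‖ + 2 * (|β| * ‖ξ‖ ^ 2) * ‖d‖ := by ring
    _ ≤ 3 * Γ * σ ^ (p / 2 - 1) * ‖d‖ := by nlinarith [norm_nonneg d]

theorem norm_radialField_sub_le {a a' : ℝ → ℝ} {p Γ ε B : ℝ} {ξ₀ ξ₁ : E}
    (ha : ∀ σ : ℝ, 0 < σ → HasDerivAt a (a' σ) σ)
    (ha_le : ∀ σ : ℝ, 0 < σ → |a σ| ≤ Γ * σ ^ (p / 2 - 1))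
    (ha'_le : ∀ σ : ℝ, 0 < σ → |a' σ| ≤ Γ * σ ^ (p / 2 - 2)) (hε : 0 < ε)
    (hB : ∀ ξ ∈ segment ℝ ξ₀ ξ₁, 3 * Γ * (ε ^ 2 + ‖ξ‖ ^ 2) ^ (p / 2 - 1) ≤ B) :
    ‖radialField a ε ξ₁ - radialField a ε ξ₀‖ ≤ B * ‖ξ₁ - ξ₀‖ := by
  have hσ (ξ : E) : 0 < ε ^ 2 + ‖ξ‖ ^ 2 := by positivity
  refine (convex_segment ξ₀ ξ₁).norm_image_sub_le_of_norm_hasFDerivWithin_le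
    (fun ξ _ => (hasFDerivAt_radialField (ha _ (hσ ξ))).hasFDerivWithinAt)
    (fun ξ hξ => (norm_radialFieldDeriv_le (hσ ξ) ?_ (ha_le _ (hσ ξ)) (ha'_le _ (hσ ξ))).trans
      (hB ξ hξ)) (left_mem_segment ℝ ξ₀ ξ₁) (right_mem_segment ℝ ξ₀ ξ₁)
  exact le_add_of_nonneg_left (sq_nonneg ε)

theorem norm_radialField_le {a : ℝ → ℝ} {p Γ ε : ℝ} (hp : p ≤ 2) (hΓ : 0 ≤ Γ)
    (ha_le : ∀ σ : ℝ, 0 < σ → |a σ| ≤ Γ * σ ^ (p / 2 - 1)) (ξ : E) :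
    ‖radialField a ε ξ‖ ≤ Γ * ‖ξ‖ ^ (p - 1) := by
  rcases eq_or_ne ξ 0 with rfl | hξ
  · simpa [radialField] using mul_nonneg hΓ (rpow_nonneg le_rfl _)
  have hn : 0 < ‖ξ‖ := norm_pos_iff.2 hξ
  have hσ : ‖ξ‖ ^ 2 ≤ ε ^ 2 + ‖ξ‖ ^ 2 := le_add_of_nonneg_left (sq_nonneg ε)
  calc ‖radialField a ε ξ‖ = |a (ε ^ 2 + ‖ξ‖ ^ 2)| * ‖ξ‖ := by
        rw [radialField, norm_smul, Real.norm_eq_abs]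
    _ ≤ Γ * (ε ^ 2 + ‖ξ‖ ^ 2) ^ (p / 2 - 1) * ‖ξ‖ := by gcongr; exact ha_le _ (by positivity)
    _ ≤ Γ * (‖ξ‖ ^ 2) ^ (p / 2 - 1) * ‖ξ‖ := by
        gcongr Γ * ?_ * ‖ξ‖
        exact rpow_le_rpow_of_nonpos (pow_pos hn 2) hσ (by linarith)
    _ = Γ * ‖ξ‖ ^ (p - 1) := by
        rw [sq_rpow_half_sub_one hn.le, mul_assoc, ← rpow_add_one hn.ne']
        ring_nf

theorem norm_radialField_sub_le_of_lt_two {a a' : ℝ → ℝ} {p Γ ε : ℝ} (hp : 1 < p) (hp2 : p < 2)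
    (hΓ : 0 ≤ Γ) (ha : ∀ σ : ℝ, 0 < σ → HasDerivAt a (a' σ) σ)
    (ha_le : ∀ σ : ℝ, 0 < σ → |a σ| ≤ Γ * σ ^ (p / 2 - 1))
    (ha'_le : ∀ σ : ℝ, 0 < σ → |a' σ| ≤ Γ * σ ^ (p / 2 - 2)) (hε : 0 < ε) (ξ₀ ξ₁ : E) :
    ‖radialField a ε ξ₁ - radialField a ε ξ₀‖ ≤ 3 * 2 ^ p * Γ * ‖ξ₁ - ξ₀‖ ^ (p - 1) := by
  rcases eq_or_ne ξ₁ ξ₀ with rfl | hne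
  · simpa using mul_nonneg (by positivity : (0 : ℝ) ≤ 3 * 2 ^ p * Γ) (rpow_nonneg le_rfl _)
  set δ := ‖ξ₁ - ξ₀‖
  have hδ : 0 < δ := norm_pos_iff.2 (sub_ne_zero.2 hne)
  have h2p : (1 : ℝ) ≤ 2 ^ p := one_le_rpow one_le_two (by linarith)
  by_cases hnear : 2 * δ ≤ max ‖ξ₀‖ ‖ξ₁‖
  · refine (norm_radialField_sub_le ha ha_le ha'_le hε (B := 3 * Γ * δ ^ (p - 2))
      fun ξ hξ => ?_).trans ?_
    · have hfar : δ ^ 2 ≤ ε ^ 2 + ‖ξ‖ ^ 2 := by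
        nlinarith [max_norm_sub_le_norm_of_mem_segment hξ]
      rw [← sq_rpow_half_sub_one hδ.le]
      gcongr 3 * Γ * ?_
      exact rpow_le_rpow_of_nonpos (by positivity) hfar (by linarith)
    · calc 3 * Γ * δ ^ (p - 2) * δ = 3 * Γ * δ ^ (p - 1) := by
            rw [mul_assoc, ← rpow_add_one hδ.ne']
            ring_nf
        _ ≤ 3 * 2 ^ p * Γ * δ ^ (p - 1) := by gcongr; linarith
  · have hsmall (ξ : E) (hξ : ‖ξ‖ ≤ max ‖ξ₀‖ ‖ξ₁‖) : ‖ξ‖ ^ (p - 1) ≤ 2 ^ (p - 1) * δ ^ (p - 1) := by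
      rw [← mul_rpow zero_le_two hδ.le]
      exact rpow_le_rpow (norm_nonneg _) (by linarith) (by linarith)
    calc ‖radialField a ε ξ₁ - radialField a ε ξ₀‖
        ≤ Γ * ‖ξ₁‖ ^ (p - 1) + Γ * ‖ξ₀‖ ^ (p - 1) :=
          (norm_sub_le _ _).trans (add_le_add (norm_radialField_le hp2.le hΓ ha_le ξ₁)
            (norm_radialField_le hp2.le hΓ ha_le ξ₀))
      _ ≤ Γ * (2 ^ (p - 1) * δ ^ (p - 1)) + Γ * (2 ^ (p - 1) * δ ^ (p - 1)) := by
          gcongr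
          · exact hsmall ξ₁ (le_max_right _ _)
          · exact hsmall ξ₀ (le_max_left _ _)
      _ = 2 ^ p * Γ * δ ^ (p - 1) := by
          rw [rpow_sub_one two_ne_zero]
          ring
      _ ≤ 3 * 2 ^ p * Γ * δ ^ (p - 1) := by gcongr; linarith

theorem norm_radialField_sub_le_of_two_le {a a' : ℝ → ℝ} {p Γ ε : ℝ} (hp : 2 ≤ p)
    (hΓ : 0 ≤ Γ) (ha : ∀ σ : ℝ, 0 < σ → HasDerivAt a (a' σ) σ)
    (ha_le : ∀ σ : ℝ, 0 < σ → |a σ| ≤ Γ * σ ^ (p / 2 - 1))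
    (ha'_le : ∀ σ : ℝ, 0 < σ → |a' σ| ≤ Γ * σ ^ (p / 2 - 2)) (hε : 0 < ε) (ξ₀ ξ₁ : E) :
    ‖radialField a ε ξ₁ - radialField a ε ξ₀‖
      ≤ 3 * 2 ^ p * Γ * (ε ^ (p - 2) + ‖ξ₀‖ ^ (p - 2) + ‖ξ₁‖ ^ (p - 2)) * ‖ξ₁ - ξ₀‖ := by
  refine norm_radialField_sub_le ha ha_le ha'_le hε fun ξ hξ => ?_
  have hmax : ‖ξ‖ ^ (p - 2) ≤ ‖ξ₀‖ ^ (p - 2) + ‖ξ₁‖ ^ (p - 2) :=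
    (rpow_le_rpow (norm_nonneg _) (norm_le_max_of_mem_segment hξ) (by linarith)).trans
      (rpow_max_le_add (norm_nonneg _) (norm_nonneg _) _)
  have h2p : (2 : ℝ) ^ (p / 2 - 1) ≤ 2 ^ p := rpow_le_rpow_of_exponent_le one_le_two (by linarith)
  calc 3 * Γ * (ε ^ 2 + ‖ξ‖ ^ 2) ^ (p / 2 - 1)
      ≤ 3 * Γ * (2 ^ (p / 2 - 1) * (ε ^ (p - 2) + ‖ξ‖ ^ (p - 2))) := by
        gcongr
        exact sq_add_sq_rpow_le hε.le (norm_nonneg _) hp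
    _ ≤ 3 * Γ * (2 ^ p * (ε ^ (p - 2) + (‖ξ₀‖ ^ (p - 2) + ‖ξ₁‖ ^ (p - 2)))) := by
        gcongr
    _ = 3 * 2 ^ p * Γ * (ε ^ (p - 2) + ‖ξ₀‖ ^ (p - 2) + ‖ξ₁‖ ^ (p - 2)) := by ring

theorem stmt_11_general (k : ℕ) (p : ℝ) (hp : 1 < p) :
    ∃ C : ℝ, 0 < C ∧
      ∀ γ Γ : ℝ, 0 < γ → γ ≤ Γ →
      ∀ g g' g'' : ℝ → ℝ,
        (∀ σ : ℝ, 0 < σ → HasDerivAt g (g' σ) σ) →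
        (∀ σ : ℝ, 0 < σ → HasDerivAt g' (g'' σ) σ) →
        ContinuousOn g'' (Set.Ioi 0) →
        (∀ σ : ℝ, 0 < σ → |g' σ| ≤ Γ * σ ^ (p / 2 - 1)) →
        (∀ σ : ℝ, 0 < σ → |g'' σ| ≤ Γ * σ ^ (p / 2 - 2)) →
        (∀ σ : ℝ, 0 ≤ σ → ∀ τ : ℝ, 0 < τ → τ < 1 →
          γ * (σ + τ) ^ (p / 2 - 1) ≤ g' (σ + τ) + 2 * σ * min (g'' (σ + τ)) 0) →
        ∀ ε : ℝ, 0 < ε → ε < 1 →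
        ∀ ξ₀ ξ₁ : EuclideanSpace ℝ (Fin k),
          (p < 2 →
            ‖g' (ε ^ 2 + ‖ξ₁‖ ^ 2) • ξ₁ - g' (ε ^ 2 + ‖ξ₀‖ ^ 2) • ξ₀‖
              ≤ C * Γ * ‖ξ₁ - ξ₀‖ ^ (p - 1))
          ∧ (2 ≤ p →
            ‖g' (ε ^ 2 + ‖ξ₁‖ ^ 2) • ξ₁ - g' (ε ^ 2 + ‖ξ₀‖ ^ 2) • ξ₀‖
              ≤ C * Γ * (ε ^ (p - 2) + ‖ξ₀‖ ^ (p - 2) + ‖ξ₁‖ ^ (p - 2)) * ‖ξ₁ - ξ₀‖) := by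
  refine ⟨3 * 2 ^ p, by positivity, ?_⟩
  intro γ Γ hγ hγΓ g g' g'' _ hg' _ hg'_le hg''_le _ ε hε _ ξ₀ ξ₁
  have hΓ : 0 ≤ Γ := hγ.le.trans hγΓ
  exact ⟨fun hp2 => norm_radialField_sub_le_of_lt_two hp hp2 hΓ hg' hg'_le hg''_le hε ξ₀ ξ₁,
    fun hp2 => norm_radialField_sub_le_of_two_le hp2 hΓ hg' hg'_le hg''_le hε ξ₀ ξ₁⟩

/-- Growth estimate for `A_{p,ε}(ξ) = g'(ε²+|ξ|²) ξ`: there exists `C > 0`, depending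
only on `p`, such that for every `g` satisfying (G1)–(G3), every `ε ∈ (0,1)`, and all
`ξ₀, ξ₁`: if `1 < p < 2` then `|A_{p,ε}(ξ₁) − A_{p,ε}(ξ₀)| ≤ C Γ |ξ₁ − ξ₀|^{p−1}`, and
if `2 ≤ p` then `|A_{p,ε}(ξ₁) − A_{p,ε}(ξ₀)| ≤ C Γ (ε^{p−2}+|ξ₀|^{p−2}+|ξ₁|^{p−2}) |ξ₁ − ξ₀|`. -/
theorem stmt_11 (k : ℕ) (hk : 1 ≤ k) (p : ℝ) (hp : 1 < p) :
    ∃ C : ℝ, 0 < C ∧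
      ∀ γ Γ : ℝ, 0 < γ → γ ≤ Γ →
      ∀ g g' g'' : ℝ → ℝ,
        (∀ σ : ℝ, 0 < σ → HasDerivAt g (g' σ) σ) →
        (∀ σ : ℝ, 0 < σ → HasDerivAt g' (g'' σ) σ) →
        ContinuousOn g'' (Set.Ioi 0) →
        (∀ σ : ℝ, 0 < σ → |g' σ| ≤ Γ * σ ^ (p / 2 - 1)) →
        (∀ σ : ℝ, 0 < σ → |g'' σ| ≤ Γ * σ ^ (p / 2 - 2)) →
        (∀ σ : ℝ, 0 ≤ σ → ∀ τ : ℝ, 0 < τ → τ < 1 →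
          γ * (σ + τ) ^ (p / 2 - 1) ≤ g' (σ + τ) + 2 * σ * min (g'' (σ + τ)) 0) →
        ∀ ε : ℝ, 0 < ε → ε < 1 →
        ∀ ξ₀ ξ₁ : EuclideanSpace ℝ (Fin k),
          (p < 2 →
            ‖g' (ε ^ 2 + ‖ξ₁‖ ^ 2) • ξ₁ - g' (ε ^ 2 + ‖ξ₀‖ ^ 2) • ξ₀‖
              ≤ C * Γ * ‖ξ₁ - ξ₀‖ ^ (p - 1))
          ∧ (2 ≤ p →
            ‖g' (ε ^ 2 + ‖ξ₁‖ ^ 2) • ξ₁ - g' (ε ^ 2 + ‖ξ₀‖ ^ 2) • ξ₀‖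
              ≤ C * Γ * (ε ^ (p - 2) + ‖ξ₀‖ ^ (p - 2) + ‖ξ₁‖ ^ (p - 2)) * ‖ξ₁ - ξ₀‖) :=
  stmt_11_general k p hp
end

section
/- Assume 2 ≤ p < ∞. There exists a constant C > 0, depending only on p, such that for every g satisfying (G1)–(G3), every ε ∈ (0,1), and all ξ₀, ξ₁ ∈ ℝ^k, one has ⟨A_{p,ε}(ξ₁) − A_{p,ε}(ξ₀), ξ₁ − ξ₀⟩ ≥ C·γ·max{|ξ₀|^{p−2}, |ξ₁|^{p−2}}·|ξ₁ − ξ₀|². -/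
/-!
Along the segment `ξₜ = ξ₀ + t (ξ₁ - ξ₀)` the function `t ↦ ⟪A(ξₜ), ξ₁ - ξ₀⟫` has derivative
`g'(s)|η|² + 2 g''(s)⟪ξₜ, η⟫²` with `s = ε² + |ξₜ|²` and `η = ξ₁ - ξ₀`. By Cauchy–Schwarz and (G3)
with `σ = |ξₜ|²`, `τ = ε²`, this is at least `γ |ξₜ|^{p-2} |η|² ≥ 0`. If `|ξ₁| ≤ |ξ₀|`, then
`|ξₜ| ≥ |ξ₀|/2` for `t ∈ [0, 1/4]`, so integrating the derivative over `[0, 1]` gives the estimate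
with `C = 1 / (4 · 2^{p-2})`; the other case follows by symmetry.
-/

open Real RealInnerProductSpace Set

lemma mul_sub_le_sub_of_hasDerivAt {f f' : ℝ → ℝ} (hf : ∀ t, HasDerivAt f (f' t) t)
    (hf'_nonneg : ∀ t, 0 ≤ f' t) {a b c x y : ℝ} (hxa : x ≤ a) (hab : a ≤ b) (hby : b ≤ y)
    (hc : ∀ t ∈ Icc a b, c ≤ f' t) : c * (b - a) ≤ f y - f x := by
  have hmono : Monotone f := monotone_of_hasDerivAt_nonneg hf hf'_nonneg
  have hab' : c * (b - a) ≤ f b - f a :=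
    (convex_Icc a b).mul_sub_le_image_sub_of_le_deriv
      (fun t _ => (hf t).continuousAt.continuousWithinAt)
      (fun t _ => (hf t).differentiableAt.differentiableWithinAt)
      (fun t ht => (hf t).deriv ▸ hc t (interior_subset ht))
      a (left_mem_Icc.2 hab) b (right_mem_Icc.2 hab) hab
  linarith [hmono hxa, hmono hby]

lemma rpow_sub_two_le_sq_add_rpow {p r τ : ℝ} (hp : 2 ≤ p) (hr : 0 ≤ r) (hτ : 0 ≤ τ) :
    r ^ (p - 2) ≤ (r ^ 2 + τ) ^ (p / 2 - 1) := by
  calc r ^ (p - 2) = (r ^ 2) ^ (p / 2 - 1) := by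
        rw [← rpow_natCast, ← rpow_mul hr]; ring_nf
    _ ≤ (r ^ 2 + τ) ^ (p / 2 - 1) := by gcongr <;> linarith

lemma div_two_le_norm_add_smul_sub {F : Type*} [SeminormedAddCommGroup F] [NormedSpace ℝ F]
    {x y : F} {t : ℝ} (hyx : ‖y‖ ≤ ‖x‖) (ht₀ : 0 ≤ t) (ht : t ≤ 1 / 4) :
    ‖x‖ / 2 ≤ ‖x + t • (y - x)‖ := by
  have hyx' : ‖y - x‖ ≤ 2 * ‖x‖ := (norm_sub_le y x).trans (by linarith)
  have hstep : t * ‖y - x‖ ≤ 1 / 4 * (2 * ‖x‖) :=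
    mul_le_mul ht hyx' (norm_nonneg _) (by norm_num)
  have htri : ‖x‖ - ‖t • (y - x)‖ ≤ ‖x + t • (y - x)‖ := norm_sub_le_norm_add _ _
  rw [norm_smul, norm_of_nonneg ht₀] at htri
  linarith

variable {E : Type*} [NormedAddCommGroup E] [InnerProductSpace ℝ E]

lemma mul_norm_sq_le_of_le_add_mul_min {a b c : ℝ} (x η : E)
    (h : c ≤ a + 2 * ‖x‖ ^ 2 * min b 0) :
    c * ‖η‖ ^ 2 ≤ a * ‖η‖ ^ 2 + 2 * b * ⟪x, η⟫ ^ 2 := by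
  have hCS : ⟪x, η⟫ ^ 2 ≤ ‖x‖ ^ 2 * ‖η‖ ^ 2 := by
    rw [← mul_pow, ← sq_abs]
    exact pow_le_pow_left₀ (abs_nonneg _) (abs_real_inner_le_norm x η) 2
  have hmin : min b 0 * (‖x‖ ^ 2 * ‖η‖ ^ 2) ≤ b * ⟪x, η⟫ ^ 2 :=
    (mul_le_mul_of_nonpos_left hCS (min_le_right b 0)).trans
      (mul_le_mul_of_nonneg_right (min_le_left b 0) (sq_nonneg _))
  nlinarith [mul_le_mul_of_nonneg_right h (sq_nonneg ‖η‖)]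

/-- The field `A_{p,ε}`. -/
def regFlux (g' : ℝ → ℝ) (ε : ℝ) (ξ : E) : E := g' (ε ^ 2 + ‖ξ‖ ^ 2) • ξ

lemma hasDerivAt_inner_regFlux_line {g' g'' : ℝ → ℝ} {ε t : ℝ} (ξ η : E)
    (hg' : HasDerivAt g' (g'' (ε ^ 2 + ‖ξ + t • η‖ ^ 2)) (ε ^ 2 + ‖ξ + t • η‖ ^ 2)) :
    HasDerivAt (fun t : ℝ => ⟪regFlux g' ε (ξ + t • η), η⟫)
      (g' (ε ^ 2 + ‖ξ + t • η‖ ^ 2) * ‖η‖ ^ 2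
        + 2 * g'' (ε ^ 2 + ‖ξ + t • η‖ ^ 2) * ⟪ξ + t • η, η⟫ ^ 2) t := by
  have hline : HasDerivAt (fun t : ℝ => ξ + t • η) η t := by
    simpa using ((hasDerivAt_id t).smul_const η).const_add ξ
  have hs := hline.norm_sq.const_add (ε ^ 2)
  have hprod : HasDerivAt (fun t : ℝ => g' (ε ^ 2 + ‖ξ + t • η‖ ^ 2) * ⟪ξ + t • η, η⟫) _ t :=
    (hg'.comp t hs).fun_mul (hline.inner ℝ (hasDerivAt_const t η))
  simp only [regFlux, real_inner_smul_left]
  refine hprod.congr_deriv ?_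
  simp only [Function.comp_apply, inner_zero_right, zero_add, real_inner_self_eq_norm_sq]
  ring

section Monotonicity

variable {g' g'' : ℝ → ℝ} {p γ ε : ℝ}

lemma rpow_mul_norm_sq_le_deriv (hp : 2 ≤ p) (hγ : 0 ≤ γ)
    (hG : ∀ σ, 0 ≤ σ →
      γ * (σ + ε ^ 2) ^ (p / 2 - 1) ≤ g' (σ + ε ^ 2) + 2 * σ * min (g'' (σ + ε ^ 2)) 0)
    (x η : E) :
    γ * ‖x‖ ^ (p - 2) * ‖η‖ ^ 2
      ≤ g' (ε ^ 2 + ‖x‖ ^ 2) * ‖η‖ ^ 2 + 2 * g'' (ε ^ 2 + ‖x‖ ^ 2) * ⟪x, η⟫ ^ 2 := by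
  rw [add_comm (ε ^ 2)]
  calc γ * ‖x‖ ^ (p - 2) * ‖η‖ ^ 2 ≤ γ * (‖x‖ ^ 2 + ε ^ 2) ^ (p / 2 - 1) * ‖η‖ ^ 2 := by
        gcongr; exact rpow_sub_two_le_sq_add_rpow hp (norm_nonneg x) (sq_nonneg ε)
    _ ≤ _ := mul_norm_sq_le_of_le_add_mul_min x η (hG _ (sq_nonneg _))

lemma inner_regFlux_sub_ge_of_norm_le (hp : 2 ≤ p) (hγ : 0 ≤ γ)
    (hg' : ∀ σ, 0 < σ → HasDerivAt g' (g'' σ) σ)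
    (hG : ∀ σ, 0 ≤ σ →
      γ * (σ + ε ^ 2) ^ (p / 2 - 1) ≤ g' (σ + ε ^ 2) + 2 * σ * min (g'' (σ + ε ^ 2)) 0)
    (hε : 0 < ε) {ξ₀ ξ₁ : E} (h : ‖ξ₁‖ ≤ ‖ξ₀‖) :
    (4 * 2 ^ (p - 2))⁻¹ * γ * ‖ξ₀‖ ^ (p - 2) * ‖ξ₁ - ξ₀‖ ^ 2
      ≤ ⟪regFlux g' ε ξ₁ - regFlux g' ε ξ₀, ξ₁ - ξ₀⟫ := by
  set η := ξ₁ - ξ₀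
  set D : ℝ → ℝ := fun t => g' (ε ^ 2 + ‖ξ₀ + t • η‖ ^ 2) * ‖η‖ ^ 2
    + 2 * g'' (ε ^ 2 + ‖ξ₀ + t • η‖ ^ 2) * ⟪ξ₀ + t • η, η⟫ ^ 2
  have hφ : ∀ t, HasDerivAt (fun t : ℝ => ⟪regFlux g' ε (ξ₀ + t • η), η⟫) (D t) t :=
    fun t => hasDerivAt_inner_regFlux_line ξ₀ η (hg' _ (by positivity))
  have hD : ∀ t, γ * ‖ξ₀ + t • η‖ ^ (p - 2) * ‖η‖ ^ 2 ≤ D t :=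
    fun t => rpow_mul_norm_sq_le_deriv hp hγ hG _ η
  have hD_nonneg : ∀ t, 0 ≤ D t := fun t => (hD t).trans' (by positivity)
  have hD_quarter : ∀ t ∈ Icc (0 : ℝ) (1 / 4), γ * (‖ξ₀‖ / 2) ^ (p - 2) * ‖η‖ ^ 2 ≤ D t := by
    intro t ht
    refine (hD t).trans' ?_
    gcongr
    exact div_two_le_norm_add_smul_sub h ht.1 ht.2
  have hint := mul_sub_le_sub_of_hasDerivAt hφ hD_nonneg le_rfl (by norm_num)
    (by norm_num : (1 / 4 : ℝ) ≤ 1) hD_quarter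
  have hends : ξ₀ + (1 : ℝ) • η = ξ₁ := by simp [η]
  simp only [hends, zero_smul, add_zero, ← inner_sub_left] at hint
  rw [div_rpow (norm_nonneg _) zero_le_two] at hint
  convert hint using 1
  field_simp
  ring

lemma inner_regFlux_sub_ge (hp : 2 ≤ p) (hγ : 0 ≤ γ)
    (hg' : ∀ σ, 0 < σ → HasDerivAt g' (g'' σ) σ)
    (hG : ∀ σ, 0 ≤ σ →
      γ * (σ + ε ^ 2) ^ (p / 2 - 1) ≤ g' (σ + ε ^ 2) + 2 * σ * min (g'' (σ + ε ^ 2)) 0)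
    (hε : 0 < ε) (ξ₀ ξ₁ : E) :
    (4 * 2 ^ (p - 2))⁻¹ * γ * max (‖ξ₀‖ ^ (p - 2)) (‖ξ₁‖ ^ (p - 2)) * ‖ξ₁ - ξ₀‖ ^ 2
      ≤ ⟪regFlux g' ε ξ₁ - regFlux g' ε ξ₀, ξ₁ - ξ₀⟫ := by
  wlog h : ‖ξ₁‖ ≤ ‖ξ₀‖ generalizing ξ₀ ξ₁
  · have := this ξ₁ ξ₀ (le_of_not_ge h)
    rwa [max_comm, norm_sub_rev, ← inner_neg_neg, neg_sub, neg_sub] at this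
  rw [max_eq_left (rpow_le_rpow (norm_nonneg _) h (by linarith))]
  exact inner_regFlux_sub_ge_of_norm_le hp hγ hg' hG hε h

end Monotonicity

theorem stmt_13_general (k : ℕ) (p : ℝ) (hp : 2 ≤ p) :
    ∃ C : ℝ, 0 < C ∧
      ∀ γ Γ : ℝ, 0 < γ → γ ≤ Γ →
      ∀ g g' g'' : ℝ → ℝ,
        (∀ σ : ℝ, 0 < σ → HasDerivAt g (g' σ) σ) →
        (∀ σ : ℝ, 0 < σ → HasDerivAt g' (g'' σ) σ) →
        ContinuousOn g'' (Set.Ioi 0) →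
        (∀ σ : ℝ, 0 < σ → |g' σ| ≤ Γ * σ ^ (p / 2 - 1)) →
        (∀ σ : ℝ, 0 < σ → |g'' σ| ≤ Γ * σ ^ (p / 2 - 2)) →
        (∀ σ : ℝ, 0 ≤ σ → ∀ τ : ℝ, 0 < τ → τ < 1 →
          γ * (σ + τ) ^ (p / 2 - 1) ≤ g' (σ + τ) + 2 * σ * min (g'' (σ + τ)) 0) →
        ∀ ε : ℝ, 0 < ε → ε < 1 →
        ∀ ξ₀ ξ₁ : EuclideanSpace ℝ (Fin k),
          C * γ * max (‖ξ₀‖ ^ (p - 2)) (‖ξ₁‖ ^ (p - 2)) * ‖ξ₁ - ξ₀‖ ^ 2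
            ≤ ⟪g' (ε ^ 2 + ‖ξ₁‖ ^ 2) • ξ₁ - g' (ε ^ 2 + ‖ξ₀‖ ^ 2) • ξ₀, ξ₁ - ξ₀⟫ := by
  refine ⟨(4 * 2 ^ (p - 2))⁻¹, by positivity, ?_⟩
  intro γ Γ hγ _ g g' g'' _ hg' _ _ _ hG3 ε hε hε1 ξ₀ ξ₁
  have hε2 : ε ^ 2 < 1 := by nlinarith
  exact inner_regFlux_sub_ge hp hγ.le hg' (fun σ hσ => hG3 σ hσ _ (by positivity) hε2) hε ξ₀ ξ₁

/-- Monotonicity estimate for `A_{p,ε}` when `2 ≤ p`: there exists `C > 0`, depending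
only on `p`, such that for every `g` satisfying (G1)–(G3), every `ε ∈ (0,1)`, and all
`ξ₀, ξ₁`, one has
`⟨A_{p,ε}(ξ₁) − A_{p,ε}(ξ₀), ξ₁ − ξ₀⟩ ≥ C γ max{|ξ₀|^{p−2}, |ξ₁|^{p−2}} |ξ₁ − ξ₀|²`. -/
theorem stmt_13 (k : ℕ) (hk : 1 ≤ k) (p : ℝ) (hp : 2 ≤ p) :
    ∃ C : ℝ, 0 < C ∧
      ∀ γ Γ : ℝ, 0 < γ → γ ≤ Γ →
      ∀ g g' g'' : ℝ → ℝ,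
        (∀ σ : ℝ, 0 < σ → HasDerivAt g (g' σ) σ) →
        (∀ σ : ℝ, 0 < σ → HasDerivAt g' (g'' σ) σ) →
        ContinuousOn g'' (Set.Ioi 0) →
        (∀ σ : ℝ, 0 < σ → |g' σ| ≤ Γ * σ ^ (p / 2 - 1)) →
        (∀ σ : ℝ, 0 < σ → |g'' σ| ≤ Γ * σ ^ (p / 2 - 2)) →
        (∀ σ : ℝ, 0 ≤ σ → ∀ τ : ℝ, 0 < τ → τ < 1 →
          γ * (σ + τ) ^ (p / 2 - 1) ≤ g' (σ + τ) + 2 * σ * min (g'' (σ + τ)) 0) →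
        ∀ ε : ℝ, 0 < ε → ε < 1 →
        ∀ ξ₀ ξ₁ : EuclideanSpace ℝ (Fin k),
          C * γ * max (‖ξ₀‖ ^ (p - 2)) (‖ξ₁‖ ^ (p - 2)) * ‖ξ₁ - ξ₀‖ ^ 2
            ≤ ⟪g' (ε ^ 2 + ‖ξ₁‖ ^ 2) • ξ₁ - g' (ε ^ 2 + ‖ξ₀‖ ^ 2) • ξ₀, ξ₁ - ξ₀⟫ :=
  stmt_13_general k p hp
end
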